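/- Let K be a field, t ∈ K with t ≠ 0 and t⁸ ≠ 1, n a finite index type, and M an n×n matrix over K. Assume there are indices a ≠ b such that rows a and b of M vanish outside columns a and b, with M_{a,a} = 0, M_{a,b} = M_{b,a} = t, M_{b,b} = t(t⁴ − t⁻⁴); and indices c ≠ d such that row c of M vanishes outside columns c and d, column c of M vanishes outside rows c and d, with M_{c,c} = M_{d,d} = 0, M_{c,d} = M_{d,c} = t⁻³. If x₁, x₂, x₃ ∈ K satisfy (M − x₁I)(M − x₂I)(M − x₃I) = 0, then the multiset {x₁, x₂, x₃} equals the multiset {t⁵, t⁻³, −t⁻³}. -/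

import Mathlib

/-!
Only three entries of the cubic identity `M³ - e₁ M² + e₂ M - e₃ = 0` are needed, where `eᵢ` are
the elementary symmetric functions of `x₁, x₂, x₃`. Since the rows `a, b` of `M` only see the block
`[[0, t], [t, t⁵ - t⁻³]]`, and row and column `c` only see the block `[[0, t⁻³], [t⁻³, 0]]`, the
entries `(a, a)`, `(a, b)` and `(c, c)` of `M` and its powers are explicit. The `(a, a)` and `(c, c)`
equations give `e₁ (t² - t⁻⁶) = t² (t⁵ - t⁻³)`, hence `e₁ = t⁵` as `t⁸ ≠ 1`; then `e₃ = -t⁻¹`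
and, from `(a, b)`, `e₂ = -t⁻⁶`. These are the elementary symmetric functions of `t⁵, t⁻³, -t⁻³`.
-/

namespace Matrix

variable {α : Type*} [NonUnitalNonAssocSemiring α] {n : Type*} [Fintype n] [DecidableEq n]

theorem mul_apply_of_row_supported {M : Matrix n n α} {i a b : n} (hab : a ≠ b)
    (h : ∀ k, k ≠ a → k ≠ b → M i k = 0) (N : Matrix n n α) (j : n) :
    (M * N) i j = M i a * N a j + M i b * N b j := by
  rw [mul_apply, ← Finset.sum_subset (Finset.subset_univ {a, b}), Finset.sum_pair hab]
  intro k _ hk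
  simp only [Finset.mem_insert, Finset.mem_singleton, not_or] at hk
  rw [h k hk.1 hk.2, zero_mul]

theorem mul_apply_of_col_supported {N : Matrix n n α} {j c d : n} (hcd : c ≠ d)
    (h : ∀ k, k ≠ c → k ≠ d → N k j = 0) (M : Matrix n n α) (i : n) :
    (M * N) i j = M i c * N c j + M i d * N d j := by
  rw [mul_apply, ← Finset.sum_subset (Finset.subset_univ {c, d}), Finset.sum_pair hcd]
  intro k _ hk
  simp only [Finset.mem_insert, Finset.mem_singleton, not_or] at hk
  rw [h k hk.1 hk.2, mul_zero]

end Matrix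

theorem sub_smul_one_mul_sub_smul_one_mul_sub_smul_one {K A : Type*} [CommRing K] [Ring A]
    [Algebra K A] (m : A) (x₁ x₂ x₃ : K) :
    (m - x₁ • 1) * (m - x₂ • 1) * (m - x₃ • 1) =
      m ^ 3 - (x₁ + x₂ + x₃) • m ^ 2 + (x₁ * x₂ + x₁ * x₃ + x₂ * x₃) • m -
        (x₁ * x₂ * x₃) • (1 : A) := by
  simp only [sub_mul, mul_sub, smul_mul_assoc, mul_smul_comm, one_mul, mul_one, sq,
    pow_three, mul_assoc]
  module

open Polynomial in
theorem Multiset.triple_eq_of_vieta {R : Type*} [CommRing R] [IsDomain R]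
    {x₁ x₂ x₃ y₁ y₂ y₃ : R} (h₁ : x₁ + x₂ + x₃ = y₁ + y₂ + y₃)
    (h₂ : x₁ * x₂ + x₁ * x₃ + x₂ * x₃ = y₁ * y₂ + y₁ * y₃ + y₂ * y₃)
    (h₃ : x₁ * x₂ * x₃ = y₁ * y₂ * y₃) :
    ({x₁, x₂, x₃} : Multiset R) = {y₁, y₂, y₃} := by
  have cubic : ∀ z₁ z₂ z₃ : R, (({z₁, z₂, z₃} : Multiset R).map fun r => X - C r).prod =
      X ^ 3 - C (z₁ + z₂ + z₃) * X ^ 2 + C (z₁ * z₂ + z₁ * z₃ + z₂ * z₃) * X -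
        C (z₁ * z₂ * z₃) := by
    intro z₁ z₂ z₃
    simp only [insert_eq_cons, map_cons, map_singleton, prod_cons, prod_singleton, C_add,
      C_mul]
    ring
  rw [← roots_multiset_prod_X_sub_C {x₁, x₂, x₃}, ← roots_multiset_prod_X_sub_C {y₁, y₂, y₃},
    cubic, cubic, h₁, h₂, h₃]

theorem esymm_eq_of_entry_equations {K : Type*} [Field K] {t e₁ e₂ e₃ : K} (ht : t ≠ 0)
    (ht8 : t ^ 8 ≠ 1) (eq_aa : t ^ 2 * (t ^ 5 - t⁻¹ ^ 3) - e₁ * t ^ 2 - e₃ = 0)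
    (eq_ab : t * (t ^ 2 + (t ^ 5 - t⁻¹ ^ 3) ^ 2) - e₁ * (t * (t ^ 5 - t⁻¹ ^ 3)) + e₂ * t = 0)
    (eq_cc : -(e₁ * t⁻¹ ^ 6) - e₃ = 0) :
    e₁ = t ^ 5 + t⁻¹ ^ 3 + -t⁻¹ ^ 3 ∧
      e₂ = t ^ 5 * t⁻¹ ^ 3 + t ^ 5 * -t⁻¹ ^ 3 + t⁻¹ ^ 3 * -t⁻¹ ^ 3 ∧
      e₃ = t ^ 5 * t⁻¹ ^ 3 * -t⁻¹ ^ 3 := by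
  have he₁ : e₁ = t ^ 5 := by
    field_simp at eq_aa eq_cc
    have : (e₁ - t ^ 5) * (t ^ 8 - 1) = 0 := by linear_combination (-(t ^ 5)) * eq_aa + eq_cc
    exact sub_eq_zero.1 ((mul_eq_zero.1 this).resolve_right (sub_ne_zero.2 ht8))
  rw [he₁] at eq_ab eq_cc ⊢
  refine ⟨by ring, ?_, ?_⟩
  · field_simp at eq_ab ⊢
    linear_combination eq_ab
  · field_simp at eq_cc ⊢
    linear_combination -eq_cc

theorem stmt_10 {K : Type*} [Field K] (t : K) (ht : t ≠ 0) (ht8 : t ^ 8 ≠ 1)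
    {n : Type*} [Fintype n] [DecidableEq n] (M : Matrix n n K)
    (a b : n) (hab : a ≠ b)
    (hrowa : ∀ j, j ≠ a → j ≠ b → M a j = 0)
    (hrowb : ∀ j, j ≠ a → j ≠ b → M b j = 0)
    (haa : M a a = 0) (hab' : M a b = t) (hba : M b a = t)
    (hbb : M b b = t * (t ^ 4 - t⁻¹ ^ 4))
    (c d : n) (hcd : c ≠ d)
    (hrowc : ∀ j, j ≠ c → j ≠ d → M c j = 0)
    (hcolc : ∀ j, j ≠ c → j ≠ d → M j c = 0)
    (hcc : M c c = 0) (hdd : M d d = 0)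
    (hcd' : M c d = t⁻¹ ^ 3) (hdc : M d c = t⁻¹ ^ 3)
    (x₁ x₂ x₃ : K)
    (hmin : (M - x₁ • 1) * (M - x₂ • 1) * (M - x₃ • 1) = 0) :
    ({x₁, x₂, x₃} : Multiset K) = {t ^ 5, t⁻¹ ^ 3, -t⁻¹ ^ 3} := by
  rw [sub_smul_one_mul_sub_smul_one_mul_sub_smul_one] at hmin
  set e₁ := x₁ + x₂ + x₃
  set e₂ := x₁ * x₂ + x₁ * x₃ + x₂ * x₃
  set e₃ := x₁ * x₂ * x₃
  have entry (i j : n) :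
      (M ^ 3) i j - e₁ * (M ^ 2) i j + e₂ * M i j - e₃ * (1 : Matrix n n K) i j = 0 := by
    simpa using congrFun (congrFun hmin i) j
  have hrow_a := Matrix.mul_apply_of_row_supported hab hrowa
  have hrow_b := Matrix.mul_apply_of_row_supported hab hrowb
  have hbb' : M b b = t ^ 5 - t⁻¹ ^ 3 := by
    rw [hbb]
    field_simp
  have eq_aa : t ^ 2 * (t ^ 5 - t⁻¹ ^ 3) - e₁ * t ^ 2 - e₃ = 0 := by
    have h := entry a a
    simp only [pow_three, sq, hrow_a, hrow_b, haa, hab', hba, hbb', Matrix.one_apply_eq] at h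
    linear_combination h
  have eq_ab : t * (t ^ 2 + (t ^ 5 - t⁻¹ ^ 3) ^ 2) - e₁ * (t * (t ^ 5 - t⁻¹ ^ 3)) + e₂ * t = 0 := by
    have h := entry a b
    simp only [pow_three, sq, hrow_a, hrow_b, haa, hab', hba, hbb', Matrix.one_apply_ne hab] at h
    linear_combination h
  have eq_cc : -(e₁ * t⁻¹ ^ 6) - e₃ = 0 := by
    have h := entry c c
    simp only [pow_three, sq, Matrix.mul_apply_of_row_supported hcd hrowc,
      Matrix.mul_apply_of_col_supported hcd hcolc, hcc, hdd, hcd', hdc, Matrix.one_apply_eq] at h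
    linear_combination h
  obtain ⟨h₁, h₂, h₃⟩ := esymm_eq_of_entry_equations ht ht8 eq_aa eq_ab eq_cc
  exact Multiset.triple_eq_of_vieta h₁ h₂ h₃
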